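/- arXiv:1202.5754 — 4 statements merged into one kernel-verified Lean document; each statement's English description precedes it below -/
import Mathlib

section
/- Let C_* be a family of ℤ-modules (n ∈ ℤ) equipped with two differentials ∂, ∂' : C_n → C_{n−1} satisfying ∂∘∂ = 0 and ∂'∘∂' = 0, and let h : C_n → C_n be a homogeneous degree-0 family of ℤ-linear maps satisfying ∂'∘(1−h) = (1−h)∘∂, ∂∘(1+h) = (1+h)∘∂', and h∘h = 0. If g is a combinatorial propagator for ∂ (i.e. ∂g + g∂ = id), then g' := (1−h) ∘ g ∘ (1+h) is a combinatorial propagator for ∂' (i.e. ∂'g' + g'∂' = id). Moreover, if in addition h ∘ g ∘ h = 0, then g' − g = g∘h − h∘g. -/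
/-- Let `C` be a `ℤ`-graded family of `ℤ`-modules with two differentials
`∂ = d` and `∂' = d'` (encoded as `d n : C (n+1) →ₗ[ℤ] C n`), and let `h` be a degree-0
family with `∂'(1−h) = (1−h)∂`, `∂(1+h) = (1+h)∂'` and `h ∘ h = 0`.  If `g` is a
combinatorial propagator for `∂`, then `g' = (1−h) ∘ g ∘ (1+h)` is a combinatorial
propagator for `∂'`; moreover if `h ∘ g ∘ h = 0` then `g' − g = g∘h − h∘g`. -/
theorem stmt5 (C : ℤ → Type)
    [∀ n, AddCommGroup (C n)] [∀ n, Module ℤ (C n)]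
    (d d' : ∀ n : ℤ, C (n + 1) →ₗ[ℤ] C n)
    (hdd : ∀ n : ℤ, (d n).comp (d (n + 1)) = 0)
    (hd'd' : ∀ n : ℤ, (d' n).comp (d' (n + 1)) = 0)
    (h : ∀ n : ℤ, C n →ₗ[ℤ] C n)
    (h1 : ∀ n : ℤ, (d' n).comp (LinearMap.id - h (n + 1)) = (LinearMap.id - h n).comp (d n))
    (h2 : ∀ n : ℤ, (d n).comp (LinearMap.id + h (n + 1)) = (LinearMap.id + h n).comp (d' n))
    (hh : ∀ n : ℤ, (h n).comp (h n) = 0)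
    (g : ∀ n : ℤ, C n →ₗ[ℤ] C (n + 1))
    (hg : ∀ n : ℤ, (d (n + 1)).comp (g (n + 1)) + (g n).comp (d n) = LinearMap.id) :
    (∀ n : ℤ,
      (d' (n + 1)).comp ((LinearMap.id - h (n + 1 + 1)).comp
          ((g (n + 1)).comp (LinearMap.id + h (n + 1))))
        + ((LinearMap.id - h (n + 1)).comp ((g n).comp (LinearMap.id + h n))).comp (d' n)
        = LinearMap.id)
    ∧ ((∀ n : ℤ, (h (n + 1)).comp ((g n).comp (h n)) = 0) →
        ∀ n : ℤ,
          (LinearMap.id - h (n + 1)).comp ((g n).comp (LinearMap.id + h n)) - g n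
            = (g n).comp (h n) - (h (n + 1)).comp (g n)) := by

  have key : ∀ n : ℤ, (LinearMap.id - h n).comp (LinearMap.id + h n)
      = (LinearMap.id : C n →ₗ[ℤ] C n) := by
    intro n
    simp only [LinearMap.comp_add, LinearMap.sub_comp, LinearMap.add_comp,
      LinearMap.comp_sub, LinearMap.id_comp, LinearMap.comp_id, hh]
    abel
  constructor
  · intro n
    calc (d' (n + 1)).comp ((LinearMap.id - h (n + 1 + 1)).comp
          ((g (n + 1)).comp (LinearMap.id + h (n + 1))))
        + ((LinearMap.id - h (n + 1)).comp ((g n).comp (LinearMap.id + h n))).comp (d' n)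
        = ((d' (n + 1)).comp (LinearMap.id - h (n + 1 + 1))).comp
            ((g (n + 1)).comp (LinearMap.id + h (n + 1)))
          + ((LinearMap.id - h (n + 1)).comp (g n)).comp
              ((LinearMap.id + h n).comp (d' n)) := by
          simp only [LinearMap.comp_assoc]
      _ = ((LinearMap.id - h (n + 1)).comp (d (n + 1))).comp
            ((g (n + 1)).comp (LinearMap.id + h (n + 1)))
          + ((LinearMap.id - h (n + 1)).comp (g n)).comp
              ((d n).comp (LinearMap.id + h (n + 1))) := by
          rw [h1 (n + 1), h2 n]
      _ = (LinearMap.id - h (n + 1)).comp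
            (((d (n + 1)).comp (g (n + 1)) + (g n).comp (d n)).comp
              (LinearMap.id + h (n + 1))) := by
          simp only [LinearMap.add_comp, LinearMap.comp_add, LinearMap.comp_assoc]
          abel
      _ = (LinearMap.id - h (n + 1)).comp (LinearMap.id + h (n + 1)) := by
          rw [hg n, LinearMap.id_comp]
      _ = LinearMap.id := key (n + 1)
  · intro hgh n
    have e : (LinearMap.id - h (n + 1)).comp ((g n).comp (LinearMap.id + h n))
        = g n + (g n).comp (h n) - (h (n + 1)).comp (g n)
          - (h (n + 1)).comp ((g n).comp (h n)) := by
      simp only [LinearMap.comp_add, LinearMap.sub_comp, LinearMap.comp_sub,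
        LinearMap.id_comp, LinearMap.comp_id]
      abel
    rw [e, hgh n]
    abel
end

section
/- Let ε > 0 and define f : (0, ∞) → ℝ by f(u) = exp(−τ_ε(u)), where τ_ε(u) = (2/√u)·arctan(ε/√u). Then f is infinitely differentiable on (0, ∞), and for every natural number n the n-th derivative of f tends to 0 as u → 0 from the right: lim_{u→0+} f^{(n)}(u) = 0. -/
/-!
Every derivative of `f = exp (-τ_ε)` has the form `p · f`, where `p` lies in the real algebra
generated by `u^(-1/2)`, `arctan (ε / √u)` and `(u + ε²)⁻¹`: this algebra contains `τ_ε` and is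
closed under `d/du`. Each element of it grows at most like a power of `u^(-1/2)` as `u → 0⁺`,
whereas `f u ≤ exp (-2 arctan ε · u^(-1/2))` for `u ≤ 1`, which decays faster than any such power.
-/
open Real Set Filter Topology Asymptotics

theorem exists_isBigO_pow_of_mem_adjoin {α : Type*} {l : Filter α} {x : α → ℝ}
    (hx : ∀ᶠ a in l, 1 ≤ x a) {s : Set (α → ℝ)} (hs : ∀ g ∈ s, ∃ k : ℕ, g =O[l] fun a => x a ^ k)
    {h : α → ℝ} (hh : h ∈ Algebra.adjoin ℝ s) : ∃ k : ℕ, h =O[l] fun a => x a ^ k := by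
  have pow_mono : ∀ {i j : ℕ}, i ≤ j → (fun a => x a ^ i) =O[l] fun a => x a ^ j := fun hij =>
    IsBigO.of_bound' <| hx.mono fun a ha => by
      simp only [norm_pow, Real.norm_eq_abs, abs_of_nonneg (zero_le_one.trans ha)]
      exact pow_le_pow_right₀ ha hij
  induction hh using Algebra.adjoin_induction with
  | mem g hg => exact hs g hg
  | algebraMap r => exact ⟨0, by simpa using isBigO_const_const r (one_ne_zero (α := ℝ)) l⟩
  | add f g _ _ hf hg =>
    obtain ⟨i, hf⟩ := hf
    obtain ⟨j, hg⟩ := hg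
    exact ⟨i + j, (hf.trans (pow_mono (Nat.le_add_right i j))).add
      (hg.trans (pow_mono (Nat.le_add_left j i)))⟩
  | mul f g _ _ hf hg =>
    obtain ⟨i, hf⟩ := hf
    obtain ⟨j, hg⟩ := hg
    have hfg := hf.mul hg
    simp only [← pow_add] at hfg
    exact ⟨i + j, hfg⟩

theorem exists_hasDerivAt_mem_adjoin {U : Set ℝ} {s : Set (ℝ → ℝ)}
    (hs : ∀ g ∈ s, ∃ g' ∈ Algebra.adjoin ℝ s, ∀ u ∈ U, HasDerivAt g (g' u) u)
    {h : ℝ → ℝ} (hh : h ∈ Algebra.adjoin ℝ s) :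
    ∃ h' ∈ Algebra.adjoin ℝ s, ∀ u ∈ U, HasDerivAt h (h' u) u := by
  induction hh using Algebra.adjoin_induction with
  | mem g hg => exact hs g hg
  | algebraMap r => exact ⟨0, zero_mem _, fun u _ => hasDerivAt_const u r⟩
  | add f g _ _ hf hg =>
    obtain ⟨f', hf'A, hf'⟩ := hf
    obtain ⟨g', hg'A, hg'⟩ := hg
    exact ⟨f' + g', add_mem hf'A hg'A, fun u hu => (hf' u hu).add (hg' u hu)⟩
  | mul f g hfA hgA hf hg =>
    obtain ⟨f', hf'A, hf'⟩ := hf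
    obtain ⟨g', hg'A, hg'⟩ := hg
    exact ⟨f' * g + f * g', add_mem (mul_mem hf'A hgA) (mul_mem hfA hg'A),
      fun u hu => (hf' u hu).mul (hg' u hu)⟩

theorem exists_iteratedDerivWithin_exp_eq_mul {U : Set ℝ} (hU : IsOpen U)
    {A : Subalgebra ℝ (ℝ → ℝ)} (hA : ∀ h ∈ A, ∃ h' ∈ A, ∀ u ∈ U, HasDerivAt h (h' u) u)
    {g : ℝ → ℝ} (hg : g ∈ A) (n : ℕ) :
    ∃ p ∈ A, ∀ u ∈ U, iteratedDerivWithin n (fun u => exp (g u)) U u = p u * exp (g u) := by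
  induction n with
  | zero => exact ⟨1, one_mem A, fun u _ => by simp⟩
  | succ n ih =>
    obtain ⟨p, hpA, hp⟩ := ih
    obtain ⟨p', hp'A, hp'⟩ := hA p hpA
    obtain ⟨g', hg'A, hg'⟩ := hA g hg
    refine ⟨p' + p * g', add_mem hp'A (mul_mem hpA hg'A), fun u hu => ?_⟩
    have hp_nhds : iteratedDerivWithin n (fun u => exp (g u)) U =ᶠ[𝓝 u] fun u => p u * exp (g u) :=
      eventually_of_mem (hU.mem_nhds hu) hp
    rw [iteratedDerivWithin_succ, derivWithin_of_isOpen hU hu, hp_nhds.deriv_eq,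
      HasDerivAt.deriv (f := fun u => p u * exp (g u)) ((hp' u hu).mul (hg' u hu).exp)]
    simp only [Pi.add_apply, Pi.mul_apply]
    ring

noncomputable def tau (ε u : ℝ) : ℝ := 2 / √u * arctan (ε / √u)

def tauGenerators (ε : ℝ) : Set (ℝ → ℝ) :=
  {fun u => (√u)⁻¹, fun u => arctan (ε / √u), fun u => (u + ε ^ 2)⁻¹}

theorem hasDerivAt_inv_sqrt {u : ℝ} (hu : 0 < u) :
    HasDerivAt (fun u => (√u)⁻¹) (-(1 / 2) * (√u)⁻¹ ^ 3) u := by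
  have hs : √u ≠ 0 := (sqrt_pos.2 hu).ne'
  refine ((hasDerivAt_sqrt hu.ne').inv hs).congr_deriv ?_
  field_simp

theorem hasDerivAt_arctan_div_sqrt (ε : ℝ) {u : ℝ} (hu : 0 < u) :
    HasDerivAt (fun u => arctan (ε / √u)) (-(ε / 2) * ((√u)⁻¹ * (u + ε ^ 2)⁻¹)) u := by
  have hs : √u ≠ 0 := (sqrt_pos.2 hu).ne'
  have hsq : √u ^ 2 = u := sq_sqrt hu.le
  have hu' : u + ε ^ 2 ≠ 0 := by positivity
  refine ((hasDerivAt_inv_sqrt hu).const_mul ε).arctan.congr_deriv ?_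
  field_simp
  rw [hsq]

theorem tauGenerators_hasDerivAt (ε : ℝ) :
    ∀ g ∈ tauGenerators ε, ∃ g' ∈ Algebra.adjoin ℝ (tauGenerators ε),
      ∀ u ∈ Ioi 0, HasDerivAt g (g' u) u := by
  have inv_sqrt_mem : (fun u => (√u)⁻¹) ∈ Algebra.adjoin ℝ (tauGenerators ε) :=
    Algebra.subset_adjoin (by simp [tauGenerators])
  have inv_add_mem : (fun u => (u + ε ^ 2)⁻¹) ∈ Algebra.adjoin ℝ (tauGenerators ε) :=
    Algebra.subset_adjoin (by simp [tauGenerators])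
  rintro g (rfl | rfl | rfl)
  · refine ⟨(-(1 / 2) : ℝ) • (fun u => (√u)⁻¹) ^ 3,
      Subalgebra.smul_mem _ (pow_mem inv_sqrt_mem 3) _, fun u hu => ?_⟩
    simpa using hasDerivAt_inv_sqrt hu
  · refine ⟨(-(ε / 2) : ℝ) • ((fun u => (√u)⁻¹) * fun u => (u + ε ^ 2)⁻¹),
      Subalgebra.smul_mem _ (mul_mem inv_sqrt_mem inv_add_mem) _, fun u hu => ?_⟩
    simpa using hasDerivAt_arctan_div_sqrt ε hu
  · refine ⟨(-1 : ℝ) • (fun u => (u + ε ^ 2)⁻¹) ^ 2,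
      Subalgebra.smul_mem _ (pow_mem inv_add_mem 2) _, fun u (hu : 0 < u) => ?_⟩
    have hu' : u + ε ^ 2 ≠ 0 := by positivity
    refine (((hasDerivAt_id u).add_const (ε ^ 2)).inv hu').congr_deriv ?_
    simp [neg_div]

theorem tendsto_inv_sqrt_nhdsGT_zero : Tendsto (fun u => (√u)⁻¹) (𝓝[>] 0) atTop := by
  simpa only [Function.comp_def, sqrt_inv] using tendsto_sqrt_atTop.comp tendsto_inv_nhdsGT_zero

theorem tauGenerators_isBigO (ε : ℝ) :
    ∀ g ∈ tauGenerators ε, ∃ k : ℕ, g =O[𝓝[>] 0] fun u => (√u)⁻¹ ^ k := by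
  rintro g (rfl | rfl | rfl)
  · exact ⟨1, by simpa using isBigO_refl _ _⟩
  · refine ⟨0, IsBigO.of_bound (π / 2) (Eventually.of_forall fun u => ?_)⟩
    simpa using (abs_lt.2 ⟨neg_pi_div_two_lt_arctan _, arctan_lt_pi_div_two _⟩).le
  · refine ⟨2, IsBigO.of_bound' (eventually_mem_nhdsWithin.mono fun u (hu : 0 < u) => ?_)⟩
    rw [inv_pow, sq_sqrt hu.le, norm_inv, norm_inv, norm_of_nonneg hu.le,
      norm_of_nonneg (by positivity)]
    exact inv_anti₀ hu (by linarith [sq_nonneg ε])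

theorem neg_tau_mem_adjoin (ε : ℝ) : -tau ε ∈ Algebra.adjoin ℝ (tauGenerators ε) := by
  have h : -tau ε = (-2 : ℝ) • ((fun u => (√u)⁻¹) * fun u => arctan (ε / √u)) := by
    ext u
    simp only [Pi.neg_apply, tau, div_eq_mul_inv, Pi.smul_apply, Pi.mul_apply, smul_eq_mul]
    ring
  rw [h]
  exact Subalgebra.smul_mem _ (mul_mem (Algebra.subset_adjoin (by simp [tauGenerators]))
    (Algebra.subset_adjoin (by simp [tauGenerators]))) _

theorem mul_inv_sqrt_le_tau {ε u : ℝ} (hε : 0 ≤ ε) (hu : 0 < u) (hu1 : u ≤ 1) :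
    2 * arctan ε * (√u)⁻¹ ≤ tau ε u := by
  have hs : 0 < √u := sqrt_pos.2 hu
  have hε_le : ε ≤ ε / √u := le_div_self hε hs (sqrt_le_one.2 hu1)
  calc 2 * arctan ε * (√u)⁻¹ = 2 / √u * arctan ε := by ring
    _ ≤ 2 / √u * arctan (ε / √u) := by gcongr

theorem exp_neg_tau_isBigO {ε : ℝ} (hε : 0 ≤ ε) :
    (fun u => exp (-tau ε u)) =O[𝓝[>] 0] fun u => exp (-(2 * arctan ε) * (√u)⁻¹) := by
  refine IsBigO.of_bound' ?_
  filter_upwards [Ioc_mem_nhdsGT zero_lt_one] with u hu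
  simp only [norm_eq_abs, abs_exp, exp_le_exp]
  linarith [mul_inv_sqrt_le_tau hε hu.1 hu.2]

theorem contDiffOn_exp_neg_tau (ε : ℝ) :
    ContDiffOn ℝ (⊤ : ℕ∞) (fun u => exp (-tau ε u)) (Ioi 0) := by
  intro u (hu : 0 < u)
  have hs : √u ≠ 0 := (sqrt_pos.2 hu).ne'
  have : ContDiffAt ℝ (⊤ : ℕ∞) (fun u => arctan (ε / √u)) u :=
    contDiff_arctan.contDiffAt.comp u (by fun_prop (disch := first | exact hs | exact hu.ne'))
  refine ContDiffAt.contDiffWithinAt ?_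
  unfold tau
  fun_prop (disch := first | exact hs | exact hu.ne')

/-- For `ε > 0`, the function `f(u) = exp(−τ_ε(u))` with
`τ_ε(u) = (2/√u)·arctan(ε/√u)` is `C^∞` on `(0, ∞)`, and every iterated derivative
(taken within `(0, ∞)`) tends to `0` as `u → 0⁺`. -/
theorem stmt8 (ε : ℝ) (hε : 0 < ε) :
    ContDiffOn ℝ (⊤ : ℕ∞)
      (fun u : ℝ => Real.exp (-(2 / Real.sqrt u * Real.arctan (ε / Real.sqrt u))))
      (Set.Ioi 0)
    ∧ ∀ n : ℕ,
        Filter.Tendsto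
          (iteratedDerivWithin n
            (fun u : ℝ => Real.exp (-(2 / Real.sqrt u * Real.arctan (ε / Real.sqrt u))))
            (Set.Ioi 0))
          (nhdsWithin 0 (Set.Ioi 0)) (nhds 0) := by
  refine ⟨contDiffOn_exp_neg_tau ε, fun n => ?_⟩
  obtain ⟨p, hpA, hp⟩ := exists_iteratedDerivWithin_exp_eq_mul isOpen_Ioi
    (fun _ => exists_hasDerivAt_mem_adjoin (tauGenerators_hasDerivAt ε)) (neg_tau_mem_adjoin ε) n
  obtain ⟨k, hpk⟩ := exists_isBigO_pow_of_mem_adjoin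
    (tendsto_inv_sqrt_nhdsGT_zero.eventually_ge_atTop 1) (tauGenerators_isBigO ε) hpA
  have hc : 0 < 2 * arctan ε := by have := arctan_pos.2 hε; positivity
  have hlim := (tendsto_rpow_mul_exp_neg_mul_atTop_nhds_zero k _ hc).comp
    tendsto_inv_sqrt_nhdsGT_zero
  simp only [Function.comp_def, rpow_natCast] at hlim
  have hderiv : iteratedDerivWithin n (fun u => exp (-tau ε u)) (Ioi 0)
      =ᶠ[𝓝[>] 0] fun u => p u * exp (-tau ε u) := eventually_mem_nhdsWithin.mono hp
  exact (hderiv.trans_isBigO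
    (hpk.mul (exp_neg_tau_isBigO hε.le))).trans_tendsto hlim
end

section
/- Let a > 0 and let s : (0, a) → ℝ be a differentiable function such that u·s'(u) → +∞ as u → 0 from the right. Then s(u) → −∞ as u → 0 from the right. -/
/-!
Near `0` we have `u * s' u ≥ 1`, i.e. `s' ≥ (log)'`, so `s - log` is monotone on some `(0, b)`.
Hence `s u ≤ C + log u` for small `u`, and `log u → -∞`.
-/

open Filter Topology Set

theorem monotoneOn_sub_mul_log {s : ℝ → ℝ} {b c : ℝ} (hs : DifferentiableOn ℝ s (Ioo 0 b))
    (hc : ∀ u ∈ Ioo 0 b, c ≤ u * deriv s u) :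
    MonotoneOn (fun u => s u - c * Real.log u) (Ioo 0 b) := by
  have hderiv : ∀ u ∈ Ioo 0 b,
      HasDerivAt (fun u => s u - c * Real.log u) (deriv s u - c * u⁻¹) u := fun u hu =>
    (hs.differentiableAt (isOpen_Ioo.mem_nhds hu)).hasDerivAt.sub
      ((Real.hasDerivAt_log hu.1.ne').const_mul c)
  refine monotoneOn_of_deriv_nonneg (convex_Ioo 0 b)
    (fun u hu => (hderiv u hu).continuousAt.continuousWithinAt)
    (fun u hu => ?_) (fun u hu => ?_) <;> rw [interior_Ioo] at hu
  · exact (hderiv u hu).differentiableAt.differentiableWithinAt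
  · rw [(hderiv u hu).deriv, sub_nonneg, ← div_eq_mul_inv, div_le_iff₀' hu.1]
    exact hc u hu

theorem tendsto_atBot_of_eventually_le_mul_deriv {s : ℝ → ℝ} {c : ℝ} (hc : 0 < c)
    (hs : ∀ᶠ u in 𝓝[>] 0, DifferentiableAt ℝ s u ∧ c ≤ u * deriv s u) :
    Tendsto s (𝓝[>] 0) atBot := by
  obtain ⟨b, hb, hsub⟩ := mem_nhdsGT_iff_exists_Ioo_subset.1 hs
  have hmono : MonotoneOn (fun u => s u - c * Real.log u) (Ioo 0 b) :=
    monotoneOn_sub_mul_log (fun u hu => (hsub hu).1.differentiableWithinAt)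
      (fun u hu => (hsub hu).2)
  have hmid : b / 2 ∈ Ioo 0 b := ⟨half_pos hb, half_lt_self hb⟩
  have hbound : ∀ᶠ u in 𝓝[>] 0, s u ≤ (s (b / 2) - c * Real.log (b / 2)) + c * Real.log u := by
    filter_upwards [Ioo_mem_nhdsGT hmid.1] with u hu
    have := hmono ⟨hu.1, hu.2.trans hmid.2⟩ hmid hu.2.le
    linarith
  exact tendsto_atBot_mono' _ hbound
    (tendsto_atBot_add_const_left _ _ (Real.tendsto_log_nhdsGT_zero.const_mul_atBot hc))

/-- If `s` is differentiable on `(0, a)` (with `a > 0`) and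
`u · s'(u) → +∞` as `u → 0⁺`, then `s(u) → −∞` as `u → 0⁺`. -/
theorem stmt10 (a : ℝ) (ha : 0 < a) (s : ℝ → ℝ)
    (hdiff : DifferentiableOn ℝ s (Set.Ioo 0 a))
    (hlim : Filter.Tendsto (fun u : ℝ => u * derivWithin s (Set.Ioo 0 a) u)
      (nhdsWithin 0 (Set.Ioo 0 a)) Filter.atTop) :
    Filter.Tendsto s (nhdsWithin 0 (Set.Ioo 0 a)) Filter.atBot := by
  rw [nhdsWithin_Ioo_eq_nhdsGT ha] at hlim ⊢
  refine tendsto_atBot_of_eventually_le_mul_deriv one_pos ?_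
  filter_upwards [Ioo_mem_nhdsGT ha, hlim.eventually_ge_atTop 1] with u hu hu_one
  rw [derivWithin_of_isOpen isOpen_Ioo hu] at hu_one
  exact ⟨hdiff.differentiableAt (isOpen_Ioo.mem_nhds hu), hu_one⟩
end

section
/- Let d ≥ 2, let i satisfy 1 ≤ i ≤ d, let ε > 0, and let σ_ε : ℝ → ℝ be defined by σ_ε(u) = exp(−(2/√u)·arctan(ε/√u)) for u > 0 and σ_ε(u) = 0 for u ≤ 0. Define φ : (−ε², ε²) × ℝ^{d−1} → ℝ × ℝ^{d−1} × ℝ^{d−1} by φ(u; ε₂,…,ε_d) = ( u, (ε₂·σ_ε(u), …, ε_i·σ_ε(u), ε_{i+1}, …, ε_d), (ε₂, …, ε_i, ε_{i+1}·σ_ε(u), …, ε_d·σ_ε(u)) ). Then φ is C^∞, injective, its differential is injective at every point, and φ is a topological embedding onto its image (i.e. φ is a smooth embedding). -/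
/-!
On `u > 0` every derivative of `e^{-τ_ε}` has the form `f · e^{-τ_ε}` with `f` in the
ℝ-algebra generated by `u^{-1/2}`, `arctan (ε u^{-1/2})` and `(1 + ε² u⁻¹)⁻¹`: this algebra is
closed under `d/du`, and its elements grow at most polynomially in `u^{-1/2}` as `u → 0⁺`, whereas
`e^{-τ_ε(u)} ≤ e^{-1/√u}` there because `2 arctan (ε / √u) → π`. Hence each `f · e^{-τ_ε}`, extended
by zero, is flat at `0`, differentiable everywhere with derivative of the same kind, and so `σ_ε`
is `C^∞`. The rest is linear algebra: for every coordinate `j` one of the two copies of `ε_j` in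
`φ` is not multiplied by `σ_ε`, so reading off `u` and these copies is a continuous linear left
inverse of `φ`, which gives injectivity, injectivity of `dφ` and the embedding property at once.
-/

open Filter Set Topology Asymptotics Real Function

theorem contDiff_of_forall_mem_hasDerivAt {𝕜 F : Type*} [NontriviallyNormedField 𝕜]
    [NormedAddCommGroup F] [NormedSpace 𝕜 F] {S : Set (𝕜 → F)}
    (hS : ∀ f ∈ S, ∃ g ∈ S, ∀ x, HasDerivAt f (g x) x) {f : 𝕜 → F} (hf : f ∈ S) (n : ℕ∞) :
    ContDiff 𝕜 n f := by
  refine contDiff_all_iff_nat.2 (fun m => ?_) n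
  induction m generalizing f with
  | zero =>
    obtain ⟨g, -, hg⟩ := hS f hf
    exact contDiff_zero.2 (Differentiable.continuous fun x => (hg x).differentiableAt)
  | succ m ih =>
    obtain ⟨g, hgS, hg⟩ := hS f hf
    have hderiv : deriv f = g := funext fun x => (hg x).deriv
    exact contDiff_succ_iff_deriv.2
      ⟨fun x => (hg x).differentiableAt, by simp, hderiv ▸ ih hgS⟩

theorem hasDerivAt_indicator_Ioi_zero {F : Type*} [NormedAddCommGroup F] [NormedSpace ℝ F]
    {f f' : ℝ → F} (hf : ∀ x > 0, HasDerivAt f (f' x) x)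
    (hflat : Tendsto (fun x => x⁻¹ • f x) (𝓝[>] 0) (𝓝 0)) (x : ℝ) :
    HasDerivAt ((Ioi 0).indicator f) ((Ioi 0).indicator f' x) x := by
  rcases lt_trichotomy x 0 with hx | rfl | hx
  · rw [indicator_of_notMem (notMem_Ioi.2 hx.le)]
    refine (hasDerivAt_const x 0).congr_of_eventuallyEq ?_
    filter_upwards [gt_mem_nhds hx] with y hy
    exact indicator_of_notMem (notMem_Ioi.2 hy.le) _
  · rw [indicator_of_notMem (self_notMem_Ioi (a := (0:ℝ))), hasDerivAt_iff_tendsto_slope,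
      ← nhdsLT_sup_nhdsGT, tendsto_sup]
    constructor
    · refine tendsto_const_nhds.congr' ?_
      filter_upwards [self_mem_nhdsWithin] with y (hy : y < 0)
      simp [slope_def_module, indicator_of_notMem (notMem_Ioi.2 hy.le)]
    · refine hflat.congr' ?_
      filter_upwards [self_mem_nhdsWithin] with y (hy : 0 < y)
      simp [slope_def_module, indicator_of_mem (show y ∈ Ioi 0 from hy)]
  · rw [indicator_of_mem (show x ∈ Ioi 0 from hx)]
    refine (hf x hx).congr_of_eventuallyEq ?_
    filter_upwards [lt_mem_nhds hx] with y hy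
    exact indicator_of_mem (show y ∈ Ioi 0 from hy) _

theorem injective_fderiv_of_leftInverse {𝕜 E F : Type*} [NontriviallyNormedField 𝕜]
    [NormedAddCommGroup E] [NormedSpace 𝕜 E] [NormedAddCommGroup F] [NormedSpace 𝕜 F]
    {φ : E → F} (ψ : F →L[𝕜] E) (h : LeftInverse ψ φ) {x : E} (hφ : DifferentiableAt 𝕜 φ x) :
    Injective (fderiv 𝕜 φ x) := by
  have hcomp : ψ.comp (fderiv 𝕜 φ x) = ContinuousLinearMap.id 𝕜 E := by
    refine (ψ.hasFDerivAt.comp x hφ.hasFDerivAt).unique ?_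
    rw [h.comp_eq_id]
    exact hasFDerivAt_id x
  exact LeftInverse.injective fun v => by simpa using DFunLike.congr_fun hcomp v

namespace BirthDeath

noncomputable def invSqrt (u : ℝ) : ℝ := (√u)⁻¹

noncomputable def arctanInvSqrt (ε u : ℝ) : ℝ := arctan (ε * invSqrt u)

noncomputable def arctanDerivInvSqrt (ε u : ℝ) : ℝ := (1 + ε ^ 2 * invSqrt u ^ 2)⁻¹

noncomputable def passageTime (ε u : ℝ) : ℝ := 2 / √u * arctan (ε / √u)

def passageAlgebra (ε : ℝ) : Subalgebra ℝ (ℝ → ℝ) :=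
  Algebra.adjoin ℝ {invSqrt, arctanInvSqrt ε, arctanDerivInvSqrt ε}

lemma passageTime_eq (ε u : ℝ) : passageTime ε u = 2 * invSqrt u * arctanInvSqrt ε u := by
  simp [passageTime, arctanInvSqrt, invSqrt, div_eq_mul_inv]

lemma invSqrt_nonneg (u : ℝ) : 0 ≤ invSqrt u := inv_nonneg.2 (sqrt_nonneg u)

lemma invSqrt_sq {u : ℝ} (hu : 0 ≤ u) : invSqrt u ^ 2 = u⁻¹ := by
  rw [invSqrt, inv_pow, sq_sqrt hu]

lemma hasDerivAt_invSqrt {u : ℝ} (hu : 0 < u) :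
    HasDerivAt invSqrt (-2⁻¹ * invSqrt u ^ 3) u := by
  have hs : √u ≠ 0 := by positivity
  refine ((hasDerivAt_sqrt hu.ne').inv hs).congr_deriv ?_
  rw [invSqrt, inv_pow, show √u ^ 3 = √u ^ 2 * √u by ring, sq_sqrt hu.le]
  field_simp

lemma hasDerivAt_arctanInvSqrt (ε : ℝ) {u : ℝ} (hu : 0 < u) :
    HasDerivAt (arctanInvSqrt ε) (-2⁻¹ * ε * invSqrt u ^ 3 * arctanDerivInvSqrt ε u) u := by
  refine ((hasDerivAt_arctan _).comp u ((hasDerivAt_invSqrt hu).const_mul ε)).congr_deriv ?_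
  rw [arctanDerivInvSqrt, mul_pow, one_div]
  ring

lemma hasDerivAt_arctanDerivInvSqrt (ε : ℝ) {u : ℝ} (hu : 0 < u) :
    HasDerivAt (arctanDerivInvSqrt ε) (ε ^ 2 * invSqrt u ^ 4 * arctanDerivInvSqrt ε u ^ 2) u := by
  have hpos : 0 < 1 + ε ^ 2 * invSqrt u ^ 2 := by positivity
  refine ((((hasDerivAt_invSqrt hu).pow 2).const_mul (ε ^ 2)).const_add 1 |>.inv
    hpos.ne').congr_deriv ?_
  simp only [arctanDerivInvSqrt, Pi.pow_apply]
  field_simp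
  ring

variable {ε : ℝ}

lemma invSqrt_mem : invSqrt ∈ passageAlgebra ε :=
  Algebra.subset_adjoin (by simp)

lemma arctanInvSqrt_mem : arctanInvSqrt ε ∈ passageAlgebra ε :=
  Algebra.subset_adjoin (by simp)

lemma arctanDerivInvSqrt_mem : arctanDerivInvSqrt ε ∈ passageAlgebra ε :=
  Algebra.subset_adjoin (by simp)

lemma passageTime_mem : passageTime ε ∈ passageAlgebra ε := by
  rw [show passageTime ε = (2 : ℝ) • (invSqrt * arctanInvSqrt ε) from
    funext fun u => by simp [passageTime_eq, mul_assoc]]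
  exact Subalgebra.smul_mem _ (mul_mem invSqrt_mem arctanInvSqrt_mem) _

theorem exists_hasDerivAt_mem {f : ℝ → ℝ} (hf : f ∈ passageAlgebra ε) :
    ∃ g ∈ passageAlgebra ε, ∀ u > 0, HasDerivAt f (g u) u := by
  induction hf using Algebra.adjoin_induction with
  | mem f hf =>
    simp only [mem_insert_iff, mem_singleton_iff] at hf
    rcases hf with rfl | rfl | rfl
    · exact ⟨(-2⁻¹ : ℝ) • invSqrt ^ 3, Subalgebra.smul_mem _ (pow_mem invSqrt_mem 3) _,
        fun u hu => by simpa using hasDerivAt_invSqrt hu⟩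
    · refine ⟨(-2⁻¹ * ε) • (invSqrt ^ 3 * arctanDerivInvSqrt ε),
        Subalgebra.smul_mem _ (mul_mem (pow_mem invSqrt_mem 3) arctanDerivInvSqrt_mem) _,
        fun u hu => ?_⟩
      simpa [mul_assoc] using hasDerivAt_arctanInvSqrt ε hu
    · refine ⟨ε ^ 2 • (invSqrt ^ 4 * arctanDerivInvSqrt ε ^ 2),
        Subalgebra.smul_mem _ (mul_mem (pow_mem invSqrt_mem 4)
          (pow_mem arctanDerivInvSqrt_mem 2)) _, fun u hu => ?_⟩
      simpa [mul_assoc] using hasDerivAt_arctanDerivInvSqrt ε hu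
  | algebraMap c =>
    exact ⟨0, zero_mem _, fun u _ => hasDerivAt_const u c⟩
  | add f g _ _ hf hg =>
    obtain ⟨f', hf'mem, hf'⟩ := hf
    obtain ⟨g', hg'mem, hg'⟩ := hg
    exact ⟨f' + g', add_mem hf'mem hg'mem, fun u hu => (hf' u hu).add (hg' u hu)⟩
  | mul f g hfmem hgmem hf hg =>
    obtain ⟨f', hf'mem, hf'⟩ := hf
    obtain ⟨g', hg'mem, hg'⟩ := hg
    exact ⟨f' * g + f * g', add_mem (mul_mem hf'mem hgmem) (mul_mem hfmem hg'mem),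
      fun u hu => (hf' u hu).mul (hg' u hu)⟩

lemma tendsto_invSqrt_atTop : Tendsto invSqrt (𝓝[>] 0) atTop := by
  have : Tendsto (√·) (𝓝[>] 0) (𝓝[>] 0) := by
    refine tendsto_nhdsWithin_of_tendsto_nhds_of_eventually_within _ ?_ ?_
    · simpa using (continuous_sqrt.tendsto 0).mono_left nhdsWithin_le_nhds
    · filter_upwards [self_mem_nhdsWithin] with u (hu : 0 < u) using sqrt_pos.2 hu
  exact tendsto_inv_nhdsGT_zero.comp this

lemma isBigO_invSqrt_pow_of_le {k l : ℕ} (hkl : k ≤ l) :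
    (fun u => invSqrt u ^ k) =O[𝓝[>] 0] fun u => invSqrt u ^ l := by
  refine IsBigO.of_bound 1 ?_
  filter_upwards [tendsto_invSqrt_atTop.eventually_ge_atTop 1] with u hu
  simp only [norm_pow, norm_of_nonneg (invSqrt_nonneg u), one_mul]
  exact pow_le_pow_right₀ hu hkl

theorem exists_isBigO_invSqrt_pow {f : ℝ → ℝ} (hf : f ∈ passageAlgebra ε) :
    ∃ k : ℕ, f =O[𝓝[>] 0] fun u => invSqrt u ^ k := by
  induction hf using Algebra.adjoin_induction with
  | mem f hf =>
    simp only [mem_insert_iff, mem_singleton_iff] at hf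
    rcases hf with rfl | rfl | rfl
    · exact ⟨1, by simpa using isBigO_refl invSqrt _⟩
    · refine ⟨0, IsBigO.of_bound (π / 2) (Eventually.of_forall fun u => ?_)⟩
      simpa [arctanInvSqrt, abs_le] using
        ⟨(neg_pi_div_two_lt_arctan _).le, (arctan_lt_pi_div_two _).le⟩
    · refine ⟨0, IsBigO.of_bound 1 (Eventually.of_forall fun u => ?_)⟩
      simp only [arctanDerivInvSqrt, norm_inv, pow_zero, norm_one, one_mul]
      rw [norm_of_nonneg (by positivity)]
      exact inv_le_one_of_one_le₀ (le_add_of_nonneg_right (by positivity))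
  | algebraMap c =>
    exact ⟨0, by simpa using isBigO_const_const c (one_ne_zero (α := ℝ)) _⟩
  | add f g _ _ hf hg =>
    obtain ⟨k, hk⟩ := hf
    obtain ⟨l, hl⟩ := hg
    exact ⟨k + l, (hk.trans (isBigO_invSqrt_pow_of_le (k.le_add_right l))).add
      (hl.trans (isBigO_invSqrt_pow_of_le (l.le_add_left k)))⟩
  | mul f g _ _ hf hg =>
    obtain ⟨k, hk⟩ := hf
    obtain ⟨l, hl⟩ := hg
    exact ⟨k + l, by simp only [pow_add]; exact hk.mul hl⟩

lemma eventually_half_le_arctanInvSqrt (hε : 0 < ε) :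
    ∀ᶠ u in 𝓝[>] 0, 2⁻¹ ≤ arctanInvSqrt ε u := by
  have hlim : Tendsto (arctanInvSqrt ε) (𝓝[>] 0) (𝓝 (π / 2)) :=
    (tendsto_arctan_atTop.mono_right nhdsWithin_le_nhds).comp
      (tendsto_invSqrt_atTop.const_mul_atTop hε)
  exact hlim.eventually (eventually_ge_nhds (by linarith [pi_gt_three]))

theorem tendsto_inv_smul_mul_exp_neg_passageTime (hε : 0 < ε) {f : ℝ → ℝ}
    (hf : f ∈ passageAlgebra ε) :
    Tendsto (fun u => u⁻¹ • (f u * exp (-passageTime ε u))) (𝓝[>] 0) (𝓝 0) := by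
  obtain ⟨k, hk⟩ := exists_isBigO_invSqrt_pow hf
  have hexp : (fun u => exp (-passageTime ε u)) =O[𝓝[>] 0] fun u => exp (-invSqrt u) := by
    refine IsBigO.of_bound 1 ?_
    filter_upwards [eventually_half_le_arctanInvSqrt hε] with u hu
    simp only [norm_of_nonneg (exp_pos _).le, one_mul, exp_le_exp, passageTime_eq]
    nlinarith [invSqrt_nonneg u]
  have hbound : (fun u => u⁻¹ • (f u * exp (-passageTime ε u))) =O[𝓝[>] 0]
      fun u => invSqrt u ^ (k + 2) * exp (-invSqrt u) := by
    have := ((isBigO_refl (fun u => invSqrt u ^ 2) (𝓝[>] 0)).mul hk).mul hexp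
    refine this.congr' ?_ (Eventually.of_forall fun u => by ring)
    filter_upwards [self_mem_nhdsWithin] with u (hu : 0 < u)
    rw [invSqrt_sq hu.le, smul_eq_mul, mul_assoc]
  exact hbound.trans_tendsto
    ((tendsto_pow_mul_exp_neg_atTop_nhds_zero (k + 2)).comp tendsto_invSqrt_atTop)

noncomputable def passageFactor (ε : ℝ) : ℝ → ℝ :=
  (Ioi 0).indicator fun u => exp (-passageTime ε u)

theorem contDiff_indicator_mul_exp_neg_passageTime (hε : 0 < ε) {f : ℝ → ℝ}
    (hf : f ∈ passageAlgebra ε) (n : ℕ∞) :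
    ContDiff ℝ n ((Ioi 0).indicator fun u => f u * exp (-passageTime ε u)) := by
  refine contDiff_of_forall_mem_hasDerivAt (S := {h | ∃ f ∈ passageAlgebra ε,
    h = (Ioi 0).indicator fun u => f u * exp (-passageTime ε u)}) ?_ ⟨f, hf, rfl⟩ n
  rintro _ ⟨f, hf, rfl⟩
  obtain ⟨f', hf'mem, hf'⟩ := exists_hasDerivAt_mem hf
  obtain ⟨τ', hτ'mem, hτ'⟩ := exists_hasDerivAt_mem (passageTime_mem (ε := ε))
  refine ⟨_, ⟨f' - f * τ', sub_mem hf'mem (mul_mem hf hτ'mem), rfl⟩,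
    hasDerivAt_indicator_Ioi_zero (fun u hu => ?_)
      (tendsto_inv_smul_mul_exp_neg_passageTime hε hf)⟩
  have hprod : HasDerivAt (fun u => f u * exp (-passageTime ε u))
      (f' u * exp (-passageTime ε u) + f u * (exp (-passageTime ε u) * -τ' u)) u :=
    (hf' u hu).mul (hτ' u hu).neg.exp
  refine hprod.congr_deriv ?_
  simp only [Pi.sub_apply, Pi.mul_apply]
  ring

theorem contDiff_passageFactor (hε : 0 < ε) (n : ℕ∞) : ContDiff ℝ n (passageFactor ε) := by
  simpa [passageFactor] using contDiff_indicator_mul_exp_neg_passageTime hε (one_mem _) n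

section Gluing

variable {ι : Type*} (P : ι → Prop) [DecidablePred P]

def gluingMap (σ : ℝ → ℝ) (p : ℝ × (ι → ℝ)) : ℝ × (ι → ℝ) × (ι → ℝ) :=
  (p.1, fun j => if P j then p.2 j * σ p.1 else p.2 j,
    fun j => if P j then p.2 j else p.2 j * σ p.1)

def unglue [Fintype ι] : ℝ × (ι → ℝ) × (ι → ℝ) →L[ℝ] ℝ × (ι → ℝ) :=
  (ContinuousLinearMap.fst ℝ ℝ _).prod <| ContinuousLinearMap.pi fun j =>
    ContinuousLinearMap.proj j ∘L
      if P j then ContinuousLinearMap.snd ℝ _ _ ∘L ContinuousLinearMap.snd ℝ ℝ _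
      else ContinuousLinearMap.fst ℝ _ _ ∘L ContinuousLinearMap.snd ℝ ℝ _

variable [Fintype ι]

lemma leftInverse_unglue_gluingMap (σ : ℝ → ℝ) : LeftInverse (unglue P) (gluingMap P σ) := by
  intro p
  ext j
  · rfl
  · by_cases hj : P j <;> simp [unglue, gluingMap, hj]

lemma contDiff_gluingMap {σ : ℝ → ℝ} {n : WithTop ℕ∞} (hσ : ContDiff ℝ n σ) :
    ContDiff ℝ n (gluingMap P σ) := by
  refine contDiff_fst.prodMk (.prodMk (contDiff_pi.2 fun j => ?_) (contDiff_pi.2 fun j => ?_)) <;>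
    split_ifs <;> fun_prop

end Gluing

end BirthDeath

open BirthDeath in
theorem stmt14_general (d i : ℕ)
    (ε : ℝ) (hε : 0 < ε) (σ : ℝ → ℝ)
    (hσ : ∀ u : ℝ, σ u =
      if 0 < u then Real.exp (-(2 / Real.sqrt u * Real.arctan (ε / Real.sqrt u))) else 0)
    (φ : ℝ × (Fin (d - 1) → ℝ) → ℝ × (Fin (d - 1) → ℝ) × (Fin (d - 1) → ℝ))
    (hφ : ∀ p : ℝ × (Fin (d - 1) → ℝ), φ p =
      (p.1,
        fun j : Fin (d - 1) => if j.val + 2 ≤ i then p.2 j * σ p.1 else p.2 j,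
        fun j : Fin (d - 1) => if j.val + 2 ≤ i then p.2 j else p.2 j * σ p.1)) :
    ContDiffOn ℝ (⊤ : ℕ∞) φ (Set.Ioo (-ε ^ 2) (ε ^ 2) ×ˢ Set.univ)
    ∧ Set.InjOn φ (Set.Ioo (-ε ^ 2) (ε ^ 2) ×ˢ Set.univ)
    ∧ (∀ p ∈ Set.Ioo (-ε ^ 2) (ε ^ 2) ×ˢ (Set.univ : Set (Fin (d - 1) → ℝ)),
        Function.Injective (fderiv ℝ φ p))
    ∧ Topology.IsEmbedding
        ((Set.Ioo (-ε ^ 2) (ε ^ 2) ×ˢ (Set.univ : Set (Fin (d - 1) → ℝ))).restrict φ) := by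
  have hσ_eq : σ = passageFactor ε := funext fun u => by
    simp [hσ u, passageFactor, passageTime, indicator_apply]
  have hφ_eq : φ = gluingMap (fun j : Fin (d - 1) => j.val + 2 ≤ i) σ := funext hφ
  have hsmooth : ContDiff ℝ (⊤ : ℕ∞) φ :=
    hφ_eq ▸ contDiff_gluingMap _ (hσ_eq ▸ contDiff_passageFactor hε ⊤)
  have hinv := hφ_eq ▸ leftInverse_unglue_gluingMap (fun j : Fin (d - 1) => j.val + 2 ≤ i) σ
  exact ⟨hsmooth.contDiffOn, hinv.injective.injOn,
    fun p _ => injective_fderiv_of_leftInverse _ hinv (hsmooth.differentiable (by simp) p),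
    (hinv.isEmbedding (map_continuous _) hsmooth.continuous).comp .subtypeVal⟩

/-- Let `d ≥ 2`, `1 ≤ i ≤ d`, `ε > 0`, and let `σ_ε : ℝ → ℝ` be
`exp(−(2/√u)·arctan(ε/√u))` for `u > 0` and `0` for `u ≤ 0`.  The gluing map
`φ : (−ε², ε²) × ℝ^{d−1} → ℝ × ℝ^{d−1} × ℝ^{d−1}`,
`φ(u; ε₂,…,ε_d) = (u, (ε₂σ_ε(u),…,ε_iσ_ε(u), ε_{i+1},…,ε_d), (ε₂,…,ε_i, ε_{i+1}σ_ε(u),…,ε_dσ_ε(u)))`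
is `C^∞`, injective on its domain, has injective differential at every point of its
domain, and restricts to a topological embedding of its domain onto its image.
Coordinates of `ℝ^{d−1}` are indexed by `j : Fin (d−1)`, with `j` corresponding to the
classical index `j + 2 ∈ {2,…,d}`. -/
theorem stmt14 (d i : ℕ) (hd : 2 ≤ d) (hi1 : 1 ≤ i) (hid : i ≤ d)
    (ε : ℝ) (hε : 0 < ε) (σ : ℝ → ℝ)
    (hσ : ∀ u : ℝ, σ u =
      if 0 < u then Real.exp (-(2 / Real.sqrt u * Real.arctan (ε / Real.sqrt u))) else 0)
    (φ : ℝ × (Fin (d - 1) → ℝ) → ℝ × (Fin (d - 1) → ℝ) × (Fin (d - 1) → ℝ))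
    (hφ : ∀ p : ℝ × (Fin (d - 1) → ℝ), φ p =
      (p.1,
        fun j : Fin (d - 1) => if j.val + 2 ≤ i then p.2 j * σ p.1 else p.2 j,
        fun j : Fin (d - 1) => if j.val + 2 ≤ i then p.2 j else p.2 j * σ p.1)) :
    ContDiffOn ℝ (⊤ : ℕ∞) φ (Set.Ioo (-ε ^ 2) (ε ^ 2) ×ˢ Set.univ)
    ∧ Set.InjOn φ (Set.Ioo (-ε ^ 2) (ε ^ 2) ×ˢ Set.univ)
    ∧ (∀ p ∈ Set.Ioo (-ε ^ 2) (ε ^ 2) ×ˢ (Set.univ : Set (Fin (d - 1) → ℝ)),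
        Function.Injective (fderiv ℝ φ p))
    ∧ Topology.IsEmbedding
        ((Set.Ioo (-ε ^ 2) (ε ^ 2) ×ˢ (Set.univ : Set (Fin (d - 1) → ℝ))).restrict φ) :=
  stmt14_general d i ε hε σ hσ φ hφ
end
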